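/- Let Q_l = [[a² + 2a/b, a²/b], [a, 2a/b]] with a, b nonzero reals and ab + 4 ≠ 0, and let ∘ denote the Hadamard product. For even n, det(Q_l^n ∘ Q_l^(−n)) = 1 + 2(b/a) q_n², and for odd n, det(Q_l^n ∘ Q_l^(−n)) = 1 + 2b/(a(ab+4)) · l_n², where q_n, l_n are the bi-periodic Fibonacci and Lucas numbers. -/

import Mathlib

/-- Bi-periodic Fibonacci sequence: q 0 = 0, q 1 = 1,
    q n = a * q (n-1) + q (n-2) if n even, q n = b * q (n-1) + q (n-2) if n odd. -/
def bpFib (a b : ℝ) : ℕ → ℝ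
  | 0 => 0
  | 1 => 1
  | n + 2 => (if Even (n + 2) then a else b) * bpFib a b (n + 1) + bpFib a b n

/-- Bi-periodic Lucas sequence: l 0 = 2, l 1 = a,
    l n = b * l (n-1) + l (n-2) if n even, l n = a * l (n-1) + l (n-2) if n odd. -/
def bpLucas (a b : ℝ) : ℕ → ℝ
  | 0 => 2
  | 1 => a
  | n + 2 => (if Even (n + 2) then b else a) * bpLucas a b (n + 1) + bpLucas a b n

/-! Writing `E = !![a * b + 1, a; b, 1]`, one has `Q_l² = det Q_l • E`, and the powers of `E` are
`!![q (2m+1), q (2m); (b/a) q (2m), _]`. Hence `Q_l ^ n` is, up to a power of `det Q_l`, explicit in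
`q n` for even `n` and, through `l (2m+1) = a q (2m+1) + 2 q (2m)`, in `l n` for odd `n`. For an
invertible `2 × 2` matrix, `det (M ⊙ M⁻¹) = 1 + 2 M₀₁ M₁₀ / det M`, which is homogeneous of degree
zero in `M`, so only the off-diagonal product of `Q_l ^ n` and `det Q_l ^ n` are needed. -/

open Matrix

/-- With `M⁻¹ = adj M / det M`:
`det (M ⊙ M⁻¹) = ((ad)² - (bc)²) / (ad - bc)² = (ad + bc) / (ad - bc)`. -/
theorem Matrix.det_hadamard_inv_fin_two {K : Type*} [Field K] (M : Matrix (Fin 2) (Fin 2) K)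
    (h : M.det ≠ 0) : (M ⊙ M⁻¹).det = 1 + 2 * (M 0 1 * M 1 0) / M.det := by
  rw [inv_def, Ring.inverse_eq_inv', adjugate_fin_two, det_fin_two (_ ⊙ _)]
  rw [det_fin_two] at h ⊢
  simp only [hadamard_apply, smul_apply, of_apply, cons_val', cons_val_zero, cons_val_one,
    empty_val', cons_val_fin_one, smul_eq_mul]
  field_simp
  ring

section BiPeriodic

variable (a b : ℝ)

theorem bpFib_add_two (n : ℕ) :
    bpFib a b (n + 2) = (if Even n then a else b) * bpFib a b (n + 1) + bpFib a b n := by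
  simp [bpFib, Nat.even_add]

theorem bpLucas_add_two (n : ℕ) :
    bpLucas a b (n + 2) = (if Even n then b else a) * bpLucas a b (n + 1) + bpLucas a b n := by
  simp [bpLucas, Nat.even_add]

theorem bpFib_two_mul_add_two (m : ℕ) :
    bpFib a b (2 * m + 2) = a * bpFib a b (2 * m + 1) + bpFib a b (2 * m) := by
  simp [bpFib_add_two]

theorem bpFib_two_mul_add_three (m : ℕ) :
    bpFib a b (2 * m + 3) = b * bpFib a b (2 * m + 2) + bpFib a b (2 * m + 1) := by
  simp [bpFib_add_two a b (2 * m + 1)]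

/-- The two sequences alternate their coefficients in the same way, which is why their shifted
sum satisfies the Lucas recurrence. -/
theorem bpLucas_add_one : ∀ n : ℕ, bpLucas a b (n + 1) = bpFib a b n + bpFib a b (n + 2)
  | 0 => by simp [bpLucas, bpFib]
  | 1 => by
    norm_num [bpLucas, bpFib, Nat.even_iff]
    ring
  | n + 2 => by
    rw [bpLucas_add_two, bpLucas_add_one n, bpLucas_add_one (n + 1), bpFib_add_two a b (n + 2),
      bpFib_add_two a b n]
    simp only [Nat.even_add_one, not_not]
    split_ifs <;> ring

end BiPeriodic

noncomputable def Ql (a b : ℝ) : Matrix (Fin 2) (Fin 2) ℝ :=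
  !![a ^ 2 + 2 * a / b, a ^ 2 / b; a, 2 * a / b]

/-- `!![a, 1; 1, 0] * !![b, 1; 1, 0]`: it advances the bi-periodic Fibonacci sequence by
one period. -/
def bpFibTwoStep (a b : ℝ) : Matrix (Fin 2) (Fin 2) ℝ :=
  !![a * b + 1, a; b, 1]

section

variable {a b : ℝ}

theorem bpFibTwoStep_pow (ha : a ≠ 0) (m : ℕ) :
    bpFibTwoStep a b ^ m =
      !![bpFib a b (2 * m + 1), bpFib a b (2 * m);
        b / a * bpFib a b (2 * m), bpFib a b (2 * m + 1) - b * bpFib a b (2 * m)] := by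
  induction m with
  | zero => simp [bpFib, one_fin_two]
  | succ m ih =>
    rw [pow_succ, ih, bpFibTwoStep, mul_fin_two, show 2 * (m + 1) + 1 = 2 * m + 3 by ring,
      show 2 * (m + 1) = 2 * m + 2 by ring, bpFib_two_mul_add_three, bpFib_two_mul_add_two]
    ext i j
    fin_cases i <;> fin_cases j <;>
      simp only [of_apply, cons_val', cons_val_fin_one, cons_val_zero, cons_val_one, Fin.isValue,
        Fin.zero_eta, Fin.mk_one] <;>
      field_simp <;> ring

theorem det_Ql (hb : b ≠ 0) : (Ql a b).det = a ^ 2 * (a * b + 4) / b ^ 2 := by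
  rw [Ql, det_fin_two_of]
  field_simp
  ring

theorem Ql_sq (hb : b ≠ 0) : Ql a b ^ 2 = (Ql a b).det • bpFibTwoStep a b := by
  rw [det_Ql hb, Ql, bpFibTwoStep, sq, mul_fin_two]
  ext i j
  fin_cases i <;> fin_cases j <;>
    simp only [Matrix.smul_apply, of_apply, cons_val', cons_val_fin_one, cons_val_zero,
      cons_val_one, Fin.isValue, Fin.zero_eta, Fin.mk_one, smul_eq_mul] <;>
    field_simp <;> ring

theorem Ql_pow_two_mul (hb : b ≠ 0) (m : ℕ) :
    Ql a b ^ (2 * m) = (Ql a b).det ^ m • bpFibTwoStep a b ^ m := by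
  rw [pow_mul, Ql_sq hb, smul_pow]

theorem Ql_pow_two_mul_apply_zero_one_mul_apply_one_zero (ha : a ≠ 0) (hb : b ≠ 0) (m : ℕ) :
    (Ql a b ^ (2 * m)) 0 1 * (Ql a b ^ (2 * m)) 1 0 =
      (Ql a b).det ^ (2 * m) * (b / a * bpFib a b (2 * m) ^ 2) := by
  rw [Ql_pow_two_mul hb, bpFibTwoStep_pow ha]
  simp only [Matrix.smul_apply, of_apply, cons_val', cons_val_one, cons_val_fin_one,
    cons_val_zero, smul_eq_mul]
  ring

theorem Ql_pow_two_mul_add_one_apply_zero_one_mul_apply_one_zero (ha : a ≠ 0) (hb : b ≠ 0)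
    (m : ℕ) :
    (Ql a b ^ (2 * m + 1)) 0 1 * (Ql a b ^ (2 * m + 1)) 1 0 =
      (Ql a b).det ^ (2 * m) * (a / b * bpLucas a b (2 * m + 1) ^ 2) := by
  rw [pow_succ, Ql_pow_two_mul hb, bpFibTwoStep_pow ha, bpLucas_add_one, bpFib_two_mul_add_two]
  simp only [Ql, smul_of, smul_cons, smul_eq_mul, smul_empty, mul_fin_two, of_apply, cons_val',
    cons_val_fin_one, cons_val_zero, cons_val_one]
  field_simp
  ring

end

theorem Ql_hadamard_det (a b : ℝ) (ha : a ≠ 0) (hb : b ≠ 0) (hab : a * b + 4 ≠ 0) (n : ℕ) :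
    (Even n →
      (Matrix.hadamard
          ((!![a ^ 2 + 2 * a / b, a ^ 2 / b; a, 2 * a / b] : Matrix (Fin 2) (Fin 2) ℝ) ^ n)
          (((!![a ^ 2 + 2 * a / b, a ^ 2 / b; a, 2 * a / b] : Matrix (Fin 2) (Fin 2) ℝ) ^ n)⁻¹)).det =
        1 + 2 * (b / a) * (bpFib a b n) ^ 2) ∧
    (Odd n →
      (Matrix.hadamard
          ((!![a ^ 2 + 2 * a / b, a ^ 2 / b; a, 2 * a / b] : Matrix (Fin 2) (Fin 2) ℝ) ^ n)
          (((!![a ^ 2 + 2 * a / b, a ^ 2 / b; a, 2 * a / b] : Matrix (Fin 2) (Fin 2) ℝ) ^ n)⁻¹)).det =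
        1 + 2 * b / (a * (a * b + 4)) * (bpLucas a b n) ^ 2) := by
  have hQ : (!![a ^ 2 + 2 * a / b, a ^ 2 / b; a, 2 * a / b] : Matrix (Fin 2) (Fin 2) ℝ) = Ql a b :=
    rfl
  have hD : (Ql a b).det ≠ 0 := by
    rw [det_Ql hb]
    exact div_ne_zero (mul_ne_zero (pow_ne_zero 2 ha) hab) (pow_ne_zero 2 hb)
  rw [hQ, det_hadamard_inv_fin_two _ (by rw [det_pow]; exact pow_ne_zero n hD), det_pow]
  constructor
  · rintro ⟨m, rfl⟩
    rw [← two_mul, Ql_pow_two_mul_apply_zero_one_mul_apply_one_zero ha hb]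
    field_simp
  · rintro ⟨m, rfl⟩
    rw [Ql_pow_two_mul_add_one_apply_zero_one_mul_apply_one_zero ha hb, pow_succ (Ql a b).det,
      det_Ql hb]
    field_simp
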